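/- arXiv:2302.13983 — 4 statements merged into one kernel-verified Lean document; each statement's English description precedes it below -/
import Mathlib

section
/- For integers N ≥ 1 and 1 ≤ k ≤ N, the alternating combinatorial sum over odd-size index sets vanishes for even ambient size: h_{2N, 2k-1} = 0. -/
def h (N k : ℕ) : ℤ :=
  ∑ s ∈ (Finset.Icc 1 N).powersetCard k, (-1 : ℤ) ^ (∑ i ∈ s, i)

open Polynomial Finset

lemma prodlem (n : ℕ) :
    ∏ i ∈ Finset.Icc 1 (2 * n), (X + C ((-1 : ℤ) ^ i)) = (X ^ 2 - 1) ^ n := by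
  induction n with
  | zero => simp
  | succ n ih =>
    have h1 : 2 * (n + 1) = (2 * n + 1) + 1 := by ring
    rw [h1, Finset.prod_Icc_succ_top (by omega),
      Finset.prod_Icc_succ_top (by omega), ih]
    have e1 : (-1 : ℤ) ^ (2 * n + 1) = -1 := by
      rw [pow_succ, pow_mul]; simp
    have e2 : (-1 : ℤ) ^ (2 * n + 1 + 1) = 1 := by
      rw [pow_succ, e1]; ring
    rw [e1, e2, pow_succ]
    ring_nf
    simp [pow_succ]
    ring

theorem stmt3 (N k : ℕ) (hN : 1 ≤ N) (hk : 1 ≤ k) (hkN : k ≤ N) :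
    h (2 * N) (2 * k - 1) = 0 := by
  have hcard : #(Finset.Icc 1 (2 * N)) = 2 * N := by
    rw [Nat.card_Icc]; omega
  have hle : 2 * N - (2 * k - 1) ≤ #(Finset.Icc 1 (2 * N)) := by omega
  have key := Finset.prod_X_add_C_coeff (Finset.Icc 1 (2 * N))
    (fun i => (-1 : ℤ) ^ i) hle
  have hsub : #(Finset.Icc 1 (2 * N)) - (2 * N - (2 * k - 1)) = 2 * k - 1 := by
    omega
  rw [hsub] at key
  have hh : h (2 * N) (2 * k - 1)
      = ((X ^ 2 - 1 : ℤ[X]) ^ N).coeff (2 * N - (2 * k - 1)) := by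
    beta_reduce at key
    rw [← prodlem, key, h]
    apply Finset.sum_congr rfl
    intro s _
    rw [← Finset.prod_pow_eq_pow_sum]
  rw [hh]
  have hexp : ((X - 1 : ℤ[X]) ^ N).expand ℤ 2 = (X ^ 2 - 1 : ℤ[X]) ^ N := by
    simp [map_pow, map_sub]
  rw [← hexp, Polynomial.coeff_expand (by norm_num)]
  rw [if_neg]
  omega
end

section
/- For integers N ≥ 2 and 2 ≤ k ≤ N, h_{2N+2, 2k} = h_{2N+1, 2k} - h_{2N+1, 2k-2}. -/
open Finset in
lemma h_step (N k : ℕ) :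
    h (N + 1) (k + 1) = h N (k + 1) + (-1 : ℤ) ^ (N + 1) * h N k := by
  have hmem : (N + 1) ∉ Finset.Icc 1 N := by simp
  have hIcc : Finset.Icc 1 (N + 1) = insert (N + 1) (Finset.Icc 1 N) := by
    ext x; simp only [Finset.mem_Icc, Finset.mem_insert]; omega
  unfold h
  rw [hIcc, powersetCard_succ_insert hmem, Finset.sum_union, Finset.sum_image]
  · congr 1
    rw [Finset.mul_sum]
    refine Finset.sum_congr rfl fun s hs => ?_
    have hns : (N + 1) ∉ s := fun hx => hmem ((Finset.mem_powersetCard.mp hs).1 hx)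
    rw [Finset.sum_insert hns, pow_add]
  · intro s hs t ht hst
    have hns : (N + 1) ∉ s := fun hx => hmem ((Finset.mem_powersetCard.mp hs).1 hx)
    have hnt : (N + 1) ∉ t := fun hx => hmem ((Finset.mem_powersetCard.mp ht).1 hx)
    have := congrArg (fun u : Finset ℕ => u.erase (N + 1)) hst
    simpa [Finset.erase_insert hns, Finset.erase_insert hnt] using this
  · rw [Finset.disjoint_left]
    intro s hs hs'
    obtain ⟨t, ht, rfl⟩ := Finset.mem_image.mp hs'
    exact hmem ((Finset.mem_powersetCard.mp hs).1 (Finset.mem_insert_self _ _))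

lemma h_step2 (N k : ℕ) : h (N + 2) (k + 2) = h N (k + 2) - h N k := by
  rw [show N + 2 = (N + 1) + 1 from rfl, h_step, h_step, h_step]
  simp only [pow_succ]
  ring_nf
  rw [mul_comm N 2, pow_mul]
  norm_num

lemma h_zero (N : ℕ) : h N 0 = 1 := by
  simp [h]

lemma h_one_even (N : ℕ) : h (2 * N) 1 = 0 := by
  induction N with
  | zero =>
      unfold h
      rw [show Finset.Icc 1 (2 * 0) = ∅ by decide,
        Finset.powersetCard_eq_empty.mpr (by simp)]
      simp
  | succ n ih =>
      have e : 2 * (n + 1) = (2 * n + 1) + 1 := by ring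
      rw [e, show (1 : ℕ) = 0 + 1 from rfl, h_step,
        show (0 : ℕ) + 1 = 1 from rfl, show 2 * n + 1 = 2 * n + 0 + 1 from rfl,
        h_step, h_zero, ih]
      simp only [pow_succ]
      ring_nf
      rw [h_zero]
      ring

lemma h_odd (N m : ℕ) : h (2 * N) (2 * m + 1) = 0 := by
  induction N generalizing m with
  | zero =>
      unfold h
      rw [show Finset.Icc 1 (2 * 0) = ∅ by decide,
        Finset.powersetCard_eq_empty.mpr (by simp)]
      rfl
  | succ n ih =>
      rcases m with _ | m'
      · exact h_one_even (n + 1)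
      · have e : 2 * (n + 1) = 2 * n + 2 := by ring
        have h2 : 2 * (m' + 1) + 1 = (2 * m' + 1) + 2 := by ring
        rw [e, h2, h_step2, ← h2, ih, ih]
        ring

theorem stmt5 (N k : ℕ) (hN : 2 ≤ N) (hk : 2 ≤ k) (hkN : k ≤ N) :
    h (2 * N + 2) (2 * k) = h (2 * N + 1) (2 * k) - h (2 * N + 1) (2 * k - 2) := by
  obtain ⟨j, rfl⟩ : ∃ j, k = j + 2 := ⟨k - 2, by omega⟩
  have e2 : 2 * (j + 2) - 2 = 2 * j + 2 := by omega
  have e1 : 2 * (j + 2) = 2 * j + 4 := by ring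
  rw [e2, e1]
  have o1 : h (2 * N) (2 * j + 3) = 0 := by
    have := h_odd N (j + 1)
    rwa [show 2 * (j + 1) + 1 = 2 * j + 3 from by ring] at this
  have o2 : h (2 * N) (2 * j + 1) = 0 := h_odd N j
  have hA := h_step2 (2 * N) (2 * j + 2)
  rw [show 2 * j + 2 + 2 = 2 * j + 4 from by ring] at hA
  have hB := h_step (2 * N) (2 * j + 3)
  rw [show 2 * j + 3 + 1 = 2 * j + 4 from by ring] at hB
  have hC := h_step (2 * N) (2 * j + 1)
  rw [show 2 * j + 1 + 1 = 2 * j + 2 from by ring] at hC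
  rw [show 2 * N + 2 = 2 * N + 2 from rfl] at hA
  rw [hA, hB, hC, o1, o2]
  ring
end

section
/- For integers N ≥ 1 and 0 ≤ k ≤ ⌊N/2⌋, the alternating combinatorial sum satisfies the closed form h_{N,2k} = (-1)^k · C(⌊N/2⌋, k), where C denotes the binomial coefficient. -/
open Polynomial Finset in
lemma coeff_prod_h (N k : ℕ) :
    (∏ i ∈ Finset.Icc 1 N, (C ((-1:ℤ)^i) * X + 1)).coeff k = h N k := by
  rw [Finset.prod_add]
  simp only [Finset.prod_const_one, mul_one]
  rw [Polynomial.finset_sum_coeff]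
  have key : ∀ t ∈ (Finset.Icc 1 N).powerset,
      (∏ i ∈ t, (C ((-1:ℤ)^i) * X)).coeff k
        = if t.card = k then (-1:ℤ) ^ (∑ i ∈ t, i) else 0 := by
    intro t _
    rw [Finset.prod_mul_distrib, Finset.prod_const, ← map_prod,
      ← Finset.prod_pow_eq_pow_sum, Polynomial.coeff_C_mul, Polynomial.coeff_X_pow]
    split_ifs with h1 h2 h2 <;> simp_all
  rw [Finset.sum_congr rfl key, ← Finset.sum_filter, h,
    Finset.powersetCard_eq_filter]

open Polynomial Finset in
lemma prod_eq_pow (N : ℕ) :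
    ∏ i ∈ Finset.Icc 1 N, (C ((-1:ℤ)^i) * X + 1)
      = (1 - X) ^ ((N+1)/2) * (1 + X) ^ (N/2) := by
  induction N with
  | zero => simp
  | succ n ih =>
    rw [Finset.prod_Icc_succ_top (by omega), ih]
    rcases Nat.even_or_odd n with he | ho
    · obtain ⟨m, rfl⟩ := he
      have h1 : (-1:ℤ)^(m+m+1) = -1 := Odd.neg_one_pow ⟨m, by omega⟩
      have e1 : (m+m+1+1)/2 = (m+m+1)/2 + 1 := by omega
      have e2 : (m+m+1)/2 = (m+m)/2 := by omega
      rw [h1, e1, e2, pow_succ]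
      simp only [map_neg, map_one]
      ring
    · obtain ⟨m, rfl⟩ := ho
      have h1 : (-1:ℤ)^(2*m+1+1) = 1 := Even.neg_one_pow ⟨m+1, by omega⟩
      have e1 : (2*m+1+1+1)/2 = (2*m+1+1)/2 := by omega
      have e2 : (2*m+1+1)/2 = (2*m+1)/2 + 1 := by omega
      rw [h1, e1, e2, pow_succ]
      simp only [map_one]
      ring

open Polynomial Finset in
lemma coeff_one_sub_X_sq_pow (m n : ℕ) :
    ((1 - X^2 : ℤ[X])^m).coeff n
      = if 2 ∣ n then (-1:ℤ)^(n/2) * ((m.choose (n/2) : ℤ)) else 0 := by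
  have expand : (1 - X^2 : ℤ[X])^m
      = ∑ j ∈ Finset.range (m+1), C ((-1:ℤ)^j * m.choose j) * X^(2*j) := by
    rw [sub_eq_add_neg, add_comm, add_pow]
    apply Finset.sum_congr rfl
    intro j _
    rw [one_pow, mul_one, neg_pow, ← C_eq_natCast, map_mul, map_pow, map_neg,
      map_one, pow_mul]
    ring
  rw [expand, Polynomial.finset_sum_coeff]
  simp only [Polynomial.coeff_C_mul, Polynomial.coeff_X_pow]
  by_cases hn : 2 ∣ n
  · obtain ⟨k, rfl⟩ := hn
    have : ∀ j ∈ Finset.range (m+1),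
        ((-1:ℤ)^j * m.choose j) * (if 2*k = 2*j then (1:ℤ) else 0)
          = if j = k then (-1:ℤ)^j * m.choose j else 0 := by
      intro j _
      by_cases h : j = k <;> simp [h, eq_comm]
      omega
    rw [Finset.sum_congr rfl this, Finset.sum_ite_eq' (Finset.range (m+1)) k]
    by_cases hk : k ∈ Finset.range (m+1)
    · simp [hk, Nat.mul_div_cancel_left k (by norm_num : 0 < 2)]
    · have : m.choose k = 0 := Nat.choose_eq_zero_of_lt (by simp at hk; omega)
      simp [hk, this, Nat.mul_div_cancel_left k (by norm_num : 0 < 2)]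
  · rw [if_neg hn]
    apply Finset.sum_eq_zero
    intro j _
    have : ¬ (n = 2*j) := by rintro rfl; exact hn ⟨j, rfl⟩
    simp [this]

open Polynomial in
theorem stmt7 (N k : ℕ) (hN : 1 ≤ N) (hk : k ≤ N / 2) :
    h N (2 * k) = (-1 : ℤ) ^ k * ((N / 2).choose k : ℤ) := by
  rw [← coeff_prod_h, prod_eq_pow]
  rcases Nat.even_or_odd N with he | ho
  · obtain ⟨m, rfl⟩ := he
    have e1 : (m + m + 1)/2 = (m+m)/2 := by omega
    have e2 : (m + m)/2 = m := by omega
    rw [e1, e2, ← mul_pow]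
    have hmul : ((1:ℤ[X]) - X) * (1 + X) = 1 - X^2 := by ring
    rw [hmul, coeff_one_sub_X_sq_pow]
    simp [Nat.mul_div_cancel_left k (by norm_num : 0 < 2)]
  · obtain ⟨m, rfl⟩ := ho
    have e1 : (2*m + 1 + 1)/2 = m + 1 := by omega
    have e2 : (2*m + 1)/2 = m := by omega
    rw [e1, e2]
    have hsplit : ((1:ℤ[X]) - X)^(m+1) * (1 + X)^m
        = (1 - X^2)^m - X * (1 - X^2)^m := by
      have key : ((1:ℤ[X]) - X)^m * (1+X)^m = (1-X^2)^m := by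
        rw [← mul_pow]; ring_nf
      calc ((1:ℤ[X]) - X)^(m+1) * (1 + X)^m
          = (1 - X) * ((1-X)^m*(1+X)^m) := by ring
        _ = (1 - X) * (1-X^2)^m := by rw [key]
        _ = (1 - X^2)^m - X * (1 - X^2)^m := by ring
    rw [hsplit, Polynomial.coeff_sub, coeff_one_sub_X_sq_pow]
    have hX : (X * ((1:ℤ[X]) - X^2)^m).coeff (2*k) = 0 := by
      rcases k with _ | k
      · simp [Polynomial.mul_coeff_zero]
      · have : 2*(k+1) = (2*k+1) + 1 := by omega
        rw [this, Polynomial.coeff_X_mul, coeff_one_sub_X_sq_pow, if_neg (by omega)]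
    rw [hX]
    simp [Nat.mul_div_cancel_left k (by norm_num : 0 < 2)]
end

section
/- For an integer N ≥ 1, h_{N, 2⌊N/2⌋} = (-1)^{⌊N/2⌋}. -/
lemma gauss (n : ℕ) : 2 * ∑ i ∈ Finset.Icc 1 n, i = n * (n + 1) := by
  induction n with
  | zero => decide
  | succ k ih => rw [Finset.sum_Icc_succ_top (by omega), Nat.mul_add, ih]; ring

lemma negpow_sub (T a : ℕ) (h : a ≤ T) : (-1 : ℤ) ^ (T - a) = (-1) ^ T * (-1) ^ a := by
  conv_rhs => rw [← Nat.sub_add_cancel h]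
  rw [pow_add, mul_assoc, ← pow_add, ← two_mul, pow_mul, neg_one_sq, one_pow, mul_one]

lemma altsum (m : ℕ) : ∑ a ∈ Finset.Icc 1 (2 * m + 1), (-1 : ℤ) ^ a = -1 := by
  induction m with
  | zero => decide
  | succ n ih =>
    rw [show 2 * (n + 1) + 1 = (2 * n + 1) + 1 + 1 by ring,
      Finset.sum_Icc_succ_top (by omega), Finset.sum_Icc_succ_top (by omega), ih]
    ring_nf

theorem stmt9 (N : ℕ) (hN : 1 ≤ N) : h N (2 * (N / 2)) = (-1 : ℤ) ^ (N / 2) := by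
  obtain ⟨m, hm | hm⟩ := Nat.even_or_odd' N
  · -- N = 2m
    subst hm
    have hm1 : 1 ≤ m := by omega
    have hdiv : 2 * m / 2 = m := by omega
    rw [hdiv]
    have hcard : (Finset.Icc 1 (2 * m)).card = 2 * m := by
      rw [Nat.card_Icc]; omega
    unfold h
    have hps : Finset.powersetCard (2 * m) (Finset.Icc 1 (2 * m)) = {Finset.Icc 1 (2 * m)} := by
      nth_rw 1 [← hcard]
      exact Finset.powersetCard_self _
    rw [hps, Finset.sum_singleton]
    have hsum : ∑ i ∈ Finset.Icc 1 (2 * m), i = m * (2 * m + 1) := by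
      have h1 := gauss (2 * m)
      have h2 : 2 * m * (2 * m + 1) = 2 * (m * (2 * m + 1)) := by ring
      omega
    rw [hsum, show m * (2 * m + 1) = 2 * (m * m) + m by ring, pow_add, pow_mul,
      neg_one_sq, one_pow, one_mul]
  · -- N = 2m+1
    subst hm
    have hdiv : (2 * m + 1) / 2 = m := by omega
    rw [hdiv]
    set N := 2 * m + 1 with hNdef
    have hcard : (Finset.Icc 1 N).card = N := by rw [Nat.card_Icc]; omega
    unfold h
    have key : ∑ s ∈ (Finset.Icc 1 N).powersetCard (2 * m), (-1 : ℤ) ^ (∑ i ∈ s, i)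
        = ∑ t ∈ (Finset.Icc 1 N).powersetCard 1, (-1 : ℤ) ^ (∑ i ∈ Finset.Icc 1 N \ t, i) := by
      refine Finset.sum_nbij' (fun s => Finset.Icc 1 N \ s) (fun t => Finset.Icc 1 N \ t)
        ?_ ?_ ?_ ?_ ?_
      · intro a ha
        rw [Finset.mem_powersetCard] at ha ⊢
        refine ⟨Finset.sdiff_subset, ?_⟩
        rw [Finset.card_sdiff_of_subset ha.1, hcard, ha.2]
        omega
      · intro a ha
        rw [Finset.mem_powersetCard] at ha ⊢
        refine ⟨Finset.sdiff_subset, ?_⟩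
        rw [Finset.card_sdiff_of_subset ha.1, hcard, ha.2]
        omega
      · intro a ha
        rw [Finset.mem_powersetCard] at ha
        exact Finset.sdiff_sdiff_eq_self ha.1
      · intro a ha
        rw [Finset.mem_powersetCard] at ha
        exact Finset.sdiff_sdiff_eq_self ha.1
      · intro a ha
        rw [Finset.mem_powersetCard] at ha
        rw [Finset.sdiff_sdiff_eq_self ha.1]
    rw [key, Finset.powersetCard_one, Finset.sum_map]
    simp only [Function.Embedding.coeFn_mk]
    have hT : ∑ i ∈ Finset.Icc 1 N, i = (2 * m + 1) * (m + 1) := by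
      have h1 := gauss (2 * m + 1)
      have h2 : (2 * m + 1) * (2 * m + 1 + 1) = 2 * ((2 * m + 1) * (m + 1)) := by ring
      rw [hNdef]
      omega
    have step : ∀ a ∈ Finset.Icc 1 N,
        (-1 : ℤ) ^ (∑ i ∈ Finset.Icc 1 N \ {a}, i) = (-1 : ℤ) ^ ((2*m+1)*(m+1)) * (-1 : ℤ) ^ a := by
      intro a ha
      have hers : Finset.Icc 1 N \ {a} = (Finset.Icc 1 N).erase a := by
        rw [Finset.sdiff_singleton_eq_erase]
      have hsub : ∑ i ∈ (Finset.Icc 1 N).erase a, i = (2*m+1)*(m+1) - a := by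
        have h2 := Finset.add_sum_erase (Finset.Icc 1 N) id ha
        simp only [id] at h2
        omega
      have hale : a ≤ (2*m+1)*(m+1) := by
        have : a ≤ N := (Finset.mem_Icc.mp ha).2
        nlinarith
      rw [hers, hsub, negpow_sub _ _ hale]
    rw [Finset.sum_congr rfl step, ← Finset.mul_sum, altsum m,
      show (2*m+1)*(m+1) = 2 * (m * (m+1)) + m + 1 by ring, pow_add, pow_add, pow_mul,
      neg_one_sq, one_pow, one_mul, pow_one]
    ring
end
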